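/- For odd k, the graph K_{2k+1} admits a path decomposition into k+1 paths in which vertex v_{2k+1} is incident to an end edge of each of k of the paths; consequently one may delete any star of up to 2k−1 edges centered at v_{2k+1} and retain a path decomposition into at most k+1 paths. -/

import Mathlib

open SimpleGraph

/-- A path decomposition of `G`: a list of paths such that every edge of `G`
lies in exactly one of them. -/
def IsPathDecomp {V : Type*} (G : SimpleGraph V)
    (P : List (Σ u v : V, G.Walk u v)) : Prop :=
  (∀ p ∈ P, p.2.2.IsPath) ∧
  P.Pairwise (fun p q => ∀ e, e ∈ p.2.2.edges → e ∉ q.2.2.edges) ∧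
  ∀ e, e ∈ G.edgeSet ↔ ∃ p ∈ P, e ∈ p.2.2.edges

/-!
Walecki's construction. Label all vertices of `K_{2k+1}` but one, the hub, by `ZMod (2k)`. For
`j < k` the zigzag `j, j + 1, j - 1, j + 2, …, j + k` closes up through the hub into a Hamiltonian
cycle `C_j`. The edges of the zigzag `j` have label sums `2j` and `2j + 1`, so the cycles `C_j` are
edge-disjoint, and by counting they decompose `K_{2k+1}`. Opening `C_j` at its edge `{j, j + 1}`
leaves a Hamiltonian path ending with the spoke `hub–j`, and the opened edges form one more path
`0, 1, …, k`.

To delete `m ≤ 2k - 1` spokes, relabel so that they are the spokes to `0, …, m - 1`. For `j < m`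
the spoke `hub–j` is an end edge of the path `j` and is simply dropped. If `m > k`, the spokes
`hub–(j + k)` with `j < m - k` are interior edges; then the path `j` is replaced by the bare zigzag
`C_j - hub`, which takes back `{j, j + 1}`, and the extra path shrinks to `m - k, …, k`.
-/

theorem Int.eq_of_intCast_zmod_eq {n : ℕ} {a b : ℤ} (h : (a : ZMod n) = b) (h₁ : a < b + n)
    (h₂ : b < a + n) : a = b := by
  have := Int.eq_zero_of_abs_lt_dvd ((ZMod.intCast_eq_intCast_iff_dvd_sub a b n).1 h)
    (abs_lt.2 ⟨by omega, by omega⟩)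
  omega

theorem Fintype.exists_equiv_iff_of_card_eq {α β : Type*} [Fintype α] [Fintype β]
    {p : α → Prop} {q : β → Prop} [DecidablePred p] [DecidablePred q]
    (h : Fintype.card α = Fintype.card β)
    (hpq : Fintype.card {x // p x} = Fintype.card {y // q y}) :
    ∃ e : α ≃ β, ∀ x, q (e x) ↔ p x := by
  have hcompl : Fintype.card {x // ¬p x} = Fintype.card {y // ¬q y} := by
    rw [Fintype.card_subtype_compl, Fintype.card_subtype_compl, h, hpq]
  let e₁ := Fintype.equivOfCardEq hpq
  let e₂ := Fintype.equivOfCardEq hcompl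
  refine ⟨(Equiv.sumCompl p).symm.trans ((e₁.sumCongr e₂).trans (Equiv.sumCompl q)), fun x => ?_⟩
  by_cases hx : p x
  · simpa [Equiv.sumCompl_symm_apply_of_pos hx, hx] using (e₁ ⟨x, hx⟩).2
  · simpa [Equiv.sumCompl_symm_apply_of_neg hx, hx] using (e₂ ⟨x, hx⟩).2

theorem List.sub_le_countP_range {q : ℕ → Bool} {m n : ℕ} (h : ∀ j, m ≤ j → j < n → q j) :
    n - m ≤ (List.range n).countP q := by
  induction n with
  | zero => simp
  | succ n ih =>
    have := ih fun j hm hn => h j hm (by omega)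
    rw [List.range_succ, List.countP_append]
    by_cases hmn : m ≤ n
    · rw [List.countP_singleton, if_pos (h n hmn (by omega))]
      omega
    · omega

namespace SimpleGraph

variable {V : Type*} {G : SimpleGraph V}

def walkOfFun (G : SimpleGraph V) (f : ℕ → V) :
    (n : ℕ) → (∀ t < n, G.Adj (f t) (f (t + 1))) → G.Walk (f 0) (f n)
  | 0, _ => .nil
  | n + 1, h => (walkOfFun G f n fun t ht => h t (by omega)).concat (h n (by omega))

variable {f : ℕ → V} {n : ℕ} {h : ∀ t < n, G.Adj (f t) (f (t + 1))}

theorem support_walkOfFun : (walkOfFun G f n h).support = (List.range (n + 1)).map f := by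
  induction n with
  | zero => simp [walkOfFun]
  | succ n ih => rw [walkOfFun, Walk.support_concat, ih, List.range_succ (n := n + 1)]; simp

theorem edges_walkOfFun :
    (walkOfFun G f n h).edges = (List.range n).map fun t => s(f t, f (t + 1)) := by
  induction n with
  | zero => simp [walkOfFun]
  | succ n ih => rw [walkOfFun, Walk.edges_concat, ih, List.range_succ]; simp

theorem isPath_walkOfFun (hf : Set.InjOn f (Set.Iic n)) : (walkOfFun G f n h).IsPath := by
  rw [Walk.isPath_def, support_walkOfFun]
  refine List.nodup_range.map_on fun x hx y hy hxy => hf ?_ ?_ hxy <;> simp_all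

end SimpleGraph

section PathDecomp

variable {V : Type*} {G : SimpleGraph V}

theorem isPathDecomp_of_ncard_le [Finite V] {P : List (Σ u v : V, G.Walk u v)}
    (hpath : ∀ p ∈ P, p.2.2.IsPath)
    (hdisj : P.Pairwise fun p q => ∀ e, e ∈ p.2.2.edges → e ∉ q.2.2.edges)
    (hcard : G.edgeSet.ncard ≤ (P.map fun p => p.2.2.length).sum) :
    IsPathDecomp G P := by
  classical
  set L := (P.map fun p => p.2.2.edges).flatten
  have hL : ∀ e, e ∈ L ↔ ∃ p ∈ P, e ∈ p.2.2.edges := by simp [L]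
  have hnodup : L.Nodup := by
    refine List.nodup_flatten.2 ⟨?_, List.pairwise_map.2 (hdisj.imp fun h e he he' => h e he he')⟩
    simp only [List.mem_map]
    rintro _ ⟨p, hp, rfl⟩
    exact (hpath p hp).isTrail.edges_nodup
  have hsub : (L.toFinset : Set (Sym2 V)) ⊆ G.edgeSet := by
    intro e he
    obtain ⟨p, -, hep⟩ := (hL e).1 (List.mem_toFinset.1 he)
    exact p.2.2.edges_subset_edgeSet hep
  have hcover := Set.eq_of_subset_of_ncard_le hsub (by
    rw [Set.ncard_coe_finset, List.toFinset_card_of_nodup hnodup]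
    simpa [L, List.length_flatten, Function.comp_def] using hcard)
  refine ⟨hpath, hdisj, fun e => ?_⟩
  rw [← hcover, Finset.mem_coe, List.mem_toFinset, hL]

theorem exists_isPathDecomp_of_seq [Finite V] (N : ℕ) (f : ℕ → ℕ → V) (n : ℕ → ℕ)
    (hadj : ∀ j < N, ∀ t < n j, G.Adj (f j t) (f j (t + 1)))
    (hinj : ∀ j < N, Set.InjOn (f j) (Set.Iic (n j)))
    (hdisj : ∀ j < N, ∀ j' < N, ∀ t < n j, ∀ t' < n j',
      s(f j t, f j (t + 1)) = s(f j' t', f j' (t' + 1)) → j = j')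
    (hcard : G.edgeSet.ncard ≤ ((List.range N).map n).sum) :
    ∃ P : List (Σ u v : V, G.Walk u v), IsPathDecomp G P ∧
      P.map (fun p => p.2.2.edges) =
        (List.range N).map fun j => (List.range (n j)).map fun t => s(f j t, f j (t + 1)) := by
  let P := (List.finRange N).map fun j : Fin N => (⟨_, _, walkOfFun G (f j) (n j) (hadj j j.2)⟩ :
    Σ u v : V, G.Walk u v)
  have hedges : P.map (fun p => p.2.2.edges) =
      (List.range N).map fun j => (List.range (n j)).map fun t => s(f j t, f j (t + 1)) := by
    simp [P, edges_walkOfFun, ← List.map_coe_finRange_eq_range, Function.comp_def]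
  refine ⟨P, isPathDecomp_of_ncard_le ?_ ?_ ?_, hedges⟩
  · simp only [P, List.mem_map, List.mem_finRange, true_and, forall_exists_index]
    rintro _ j rfl
    exact isPath_walkOfFun (hinj j j.2)
  · refine List.pairwise_map.2 ((List.pairwise_lt_finRange N).imp fun {j j'} hjj' e he he' => ?_)
    simp only [edges_walkOfFun, List.mem_map, List.mem_range] at he he'
    obtain ⟨t, ht, rfl⟩ := he
    obtain ⟨t', ht', he⟩ := he'
    exact (Fin.val_ne_of_ne hjj'.ne) (hdisj j j.2 j' j'.2 t ht t' ht' he.symm)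
  · have hlen : P.map (fun p => p.2.2.length) = (P.map fun p => p.2.2.edges).map List.length := by
      simp [Function.comp_def]
    rw [hlen, hedges]
    simpa [Function.comp_def] using hcard

theorem ncard_edgeSet_top [Fintype V] :
    (⊤ : SimpleGraph V).edgeSet.ncard = (Fintype.card V).choose 2 := by
  classical
  rw [← coe_edgeFinset, Set.ncard_coe_finset, card_edgeFinset_top_eq_card_choose_two]

theorem adj_top_deleteEdges_star {v a b : V} {A : Finset V} (hab : a ≠ b)
    (ha : a = v → b ∉ A) (hb : b = v → a ∉ A) :
    ((⊤ : SimpleGraph V).deleteEdges {e | ∃ u ∈ A, e = s(v, u)}).Adj a b := by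
  refine deleteEdges_adj.2 ⟨hab, ?_⟩
  rintro ⟨u, hu, h⟩
  rcases Sym2.eq_iff.1 h with ⟨rfl, rfl⟩ | ⟨rfl, rfl⟩
  exacts [ha rfl hu, hb rfl hu]

theorem ncard_edgeSet_top_deleteEdges_star [Fintype V] {v : V} {A : Finset V} (hA : v ∉ A) :
    ((⊤ : SimpleGraph V).deleteEdges {e | ∃ u ∈ A, e = s(v, u)}).edgeSet.ncard + A.card =
      (Fintype.card V).choose 2 := by
  classical
  have hstar : {e | ∃ u ∈ A, e = s(v, u)} = (fun u => s(v, u)) '' (A : Set V) := by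
    ext e; simp [eq_comm]
  have hsub : (fun u => s(v, u)) '' (A : Set V) ⊆ (⊤ : SimpleGraph V).edgeSet := by
    rintro _ ⟨u, hu, rfl⟩
    exact (ne_of_mem_of_not_mem hu hA).symm
  have hcard : ((fun u => s(v, u)) '' (A : Set V)).ncard = A.card := by
    rw [Set.ncard_image_of_injective _ fun _ _ => Sym2.congr_right.1, Set.ncard_coe_finset]
  rw [edgeSet_deleteEdges, hstar, Set.ncard_sdiff hsub, ← ncard_edgeSet_top, ← hcard]
  have := Set.ncard_le_ncard hsub
  omega

end PathDecomp

namespace Walecki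

/-- `0, 1, -1, 2, -2, …` -/
def zigzag (t : ℕ) : ℤ := if t % 2 = 0 then -((t : ℤ) / 2) else ((t : ℤ) + 1) / 2

theorem zigzag_add_zigzag_succ (t : ℕ) : zigzag t + zigzag (t + 1) = ((t : ℤ) + 1) % 2 := by
  unfold zigzag; split_ifs <;> omega

theorem zigzag_bounds (t : ℕ) : -(t : ℤ) ≤ 2 * zigzag t ∧ 2 * zigzag t ≤ t + 1 := by
  unfold zigzag; split_ifs <;> omega

theorem zigzag_injective : Function.Injective zigzag := by
  intro t t' h; unfold zigzag at h; split_ifs at h <;> omega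

@[simp] theorem zigzag_zero : zigzag 0 = 0 := rfl

@[simp] theorem zigzag_one : zigzag 1 = 1 := rfl

theorem zigzag_two_mul_sub_one {k : ℕ} (hk : 0 < k) : zigzag (2 * k - 1) = k := by
  unfold zigzag; split_ifs <;> omega

/-- Names of the edges of `K_{2k+1}`: `zig j t` is the `t`-th edge of the `j`-th zigzag, `spoke x`
joins the hub to the label `x`. -/
inductive EdgeName
  | zig (j t : ℕ)
  | spoke (x : ℕ)

namespace EdgeName

def Valid (k m : ℕ) : EdgeName → Prop
  | zig j t => j < k ∧ t < 2 * k - 1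
  | spoke x => m ≤ x ∧ x < 2 * k

/-- The index of the path of the decomposition that contains the edge. -/
def owner (k m : ℕ) : EdgeName → ℕ
  | zig j t => if t = 0 ∧ m - k ≤ j then k else j
  | spoke x => if x < k then x else x - k

end EdgeName

def name (k m j t : ℕ) : EdgeName :=
  if k ≤ j then .zig (m - k + t) 0
  else if j + k < m then .zig j t
  else if t < 2 * k - 2 then .zig j (t + 1)
  else if t = 2 * k - 2 then .spoke (j + k)
  else .spoke j

def pathLength (k m j : ℕ) : ℕ :=
  if k ≤ j then k - (m - k) else if j < m then 2 * k - 1 else 2 * k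

section Names

variable {k m j t : ℕ}

theorem valid_name (hm : m < 2 * k) (hj : j ≤ k) (ht : t < pathLength k m j) :
    (name k m j t).Valid k m := by
  unfold name pathLength at *; split_ifs at * <;> simp only [EdgeName.Valid] <;> omega

theorem owner_name (hj : j ≤ k) : (name k m j t).owner k m = j := by
  unfold name
  split_ifs
  · rw [EdgeName.owner, if_pos ⟨rfl, by omega⟩]
    omega
  · rw [EdgeName.owner, if_neg (by omega)]
  · rw [EdgeName.owner, if_neg (by omega)]
  · rw [EdgeName.owner, if_neg (by omega)]
    omega
  · rw [EdgeName.owner, if_pos (by omega)]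

theorem sum_pathLength (hk : 0 < k) (hm : m < 2 * k) :
    ((List.range (k + 1)).map (pathLength k m)).sum + m = (2 * k + 1).choose 2 := by
  have hprefix : ∀ n ≤ k, ((List.range n).map (pathLength k m)).sum + min m n = 2 * k * n := by
    intro n hn
    induction n with
    | zero => simp
    | succ n ih =>
      have := ih (by omega)
      rw [List.sum_range_succ, Nat.mul_succ, pathLength, if_neg (by omega)]
      split_ifs <;> omega
  have hchoose : (2 * k + 1).choose 2 = 2 * k * k + k := by
    rw [Nat.choose_two_right, Nat.add_sub_cancel, show (2 * k + 1) * (2 * k) = (2 * k * k + k) * 2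
      by ring, Nat.mul_div_cancel _ two_pos]
  have := hprefix k le_rfl
  rw [List.sum_range_succ, hchoose, pathLength, if_pos le_rfl]
  omega

end Names

variable {V : Type*}

/-- `G` contains the complete graph on `hub` and `2k` vertices labelled by `ZMod (2k)`, except
possibly the spokes from `hub` to the labels `0, …, m - 1`. -/
structure CliqueMinusSpokes (G : SimpleGraph V) (hub : V) (k m : ℕ) where
  label : ZMod (2 * k) → V
  label_injective : Function.Injective label
  label_ne_hub : ∀ x, label x ≠ hub
  adj_label : ∀ x y, x ≠ y → G.Adj (label x) (label y)
  adj_hub : ∀ x : ℕ, m ≤ x → x < 2 * k → G.Adj hub (label x)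

namespace CliqueMinusSpokes

variable {G G' : SimpleGraph V} {hub : V} {k m : ℕ} (C : CliqueMinusSpokes G hub k m)

def mono (h : G ≤ G') : CliqueMinusSpokes G' hub k m where
  __ := C
  adj_label x y hxy := h (C.adj_label x y hxy)
  adj_hub x hmx hx := h (C.adj_hub x hmx hx)

def zig (j t : ℕ) : V := C.label ((j + zigzag t : ℤ) : ZMod (2 * k))

theorem zig_zero (j : ℕ) : C.zig j 0 = C.label j := by simp [zig]

theorem zig_succ_zero (j : ℕ) : C.zig (j + 1) 0 = C.zig j 1 := by
  simp only [zig, zigzag_zero, zigzag_one]; push_cast; ring_nf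

theorem zig_two_mul_sub_one (hk : 0 < k) (j : ℕ) : C.zig j (2 * k - 1) = C.label (j + k : ℕ) := by
  rw [zig, zigzag_two_mul_sub_one hk]; push_cast; rfl

def edge : EdgeName → Sym2 V
  | .zig j t => s(C.zig j t, C.zig j (t + 1))
  | .spoke x => s(hub, C.label x)

/-- The `t`-th vertex of the `j`-th path: for `j = k` the path `m - k, …, k`; for `j + k < m` the
zigzag `j`; otherwise the cycle `C_j` opened at `{j, j + 1}`, i.e. the zigzag `j` from its second
vertex on, then the hub, then `j`. -/
def vert (j t : ℕ) : V :=
  if k ≤ j then C.zig (m - k + t) 0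
  else if j + k < m then C.zig j t
  else if t < 2 * k - 1 then C.zig j (t + 1)
  else if t = 2 * k - 1 then hub
  else C.zig j 0

theorem label_intCast_inj {a b : ℤ} (h : C.label a = C.label b) (h₁ : a < b + 2 * k)
    (h₂ : b < a + 2 * k) : a = b :=
  Int.eq_of_intCast_zmod_eq (C.label_injective h) (by push_cast; omega) (by push_cast; omega)

theorem zig_inj {j t t' : ℕ} (h : C.zig j t = C.zig j t') (ht : t < 2 * k) (ht' : t' < 2 * k) :
    t = t' := by
  have := zigzag_bounds t
  have := zigzag_bounds t'
  exact zigzag_injective (by linarith [C.label_intCast_inj h (by omega) (by omega)])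

theorem add_eq_add_of_edge_eq {a b a' b' : ZMod (2 * k)}
    (h : s(C.label a, C.label b) = s(C.label a', C.label b')) : a + b = a' + b' := by
  rcases Sym2.eq_iff.1 h with ⟨h₁, h₂⟩ | ⟨h₁, h₂⟩ <;>
    rw [C.label_injective h₁, C.label_injective h₂]
  exact add_comm _ _

/-- The edges of the `j`-th zigzag have label sums `2j` and `2j + 1`, so distinct zigzags share no
edge. -/
theorem zig_edge_inj {j t j' t' : ℕ} (hj : j < k) (ht : t < 2 * k - 1) (hj' : j' < k)
    (ht' : t' < 2 * k - 1)
    (h : s(C.zig j t, C.zig j (t + 1)) = s(C.zig j' t', C.zig j' (t' + 1))) : j = j' ∧ t = t' := by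
  have hsum := C.add_eq_add_of_edge_eq h
  have := zigzag_add_zigzag_succ t
  have := zigzag_add_zigzag_succ t'
  have hsum' := Int.eq_of_intCast_zmod_eq (n := 2 * k)
    (a := (j + zigzag t) + (j + zigzag (t + 1))) (b := (j' + zigzag t') + (j' + zigzag (t' + 1)))
    (by push_cast at hsum ⊢; exact hsum) (by push_cast; omega) (by push_cast; omega)
  obtain rfl : j = j' := by omega
  rcases Sym2.eq_iff.1 h with ⟨h₁, -⟩ | ⟨h₁, -⟩
  · exact ⟨rfl, C.zig_inj h₁ (by omega) (by omega)⟩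
  · have := C.zig_inj h₁ (by omega) (by omega)
    omega

theorem edge_mem_edgeSet {n : EdgeName} (hn : n.Valid k m) : C.edge n ∈ G.edgeSet := by
  cases n with
  | zig j t =>
    refine C.adj_label _ _ fun h => ?_
    have := C.zig_inj (j := j) (congrArg C.label h) (by have := hn.2; omega)
      (by have := hn.2; omega)
    omega
  | spoke x => exact C.adj_hub x hn.1 hn.2

theorem eq_of_edge_eq {n n' : EdgeName} (hn : n.Valid k m) (hn' : n'.Valid k m)
    (h : C.edge n = C.edge n') : n = n' := by
  cases n with
  | zig j t =>
    cases n' with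
    | zig j' t' =>
      obtain ⟨rfl, rfl⟩ := C.zig_edge_inj hn.1 hn.2 hn'.1 hn'.2 h
      rfl
    | spoke x =>
      have : hub ∈ C.edge (.zig j t) := h ▸ Sym2.mem_mk_left _ _
      rcases Sym2.mem_iff.1 this with h' | h' <;> exact (C.label_ne_hub _ h'.symm).elim
  | spoke x =>
    cases n' with
    | zig j' t' =>
      have : hub ∈ C.edge (.zig j' t') := h ▸ Sym2.mem_mk_left _ _
      rcases Sym2.mem_iff.1 this with h' | h' <;> exact (C.label_ne_hub _ h'.symm).elim
    | spoke x' =>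
      have := congrArg ZMod.val (C.label_injective (Sym2.congr_right.1 h))
      rw [ZMod.val_cast_of_lt hn.2, ZMod.val_cast_of_lt hn'.2] at this
      rw [this]

theorem edge_name {j t : ℕ} (hk : 0 < k) (ht : t < pathLength k m j) :
    s(C.vert j t, C.vert j (t + 1)) = C.edge (name k m j t) := by
  unfold vert name pathLength at *
  split_ifs at ht ⊢ <;> try omega
  · rw [← add_assoc, zig_succ_zero]; rfl
  · rfl
  · rfl
  · rfl
  · rw [edge, show t + 1 = 2 * k - 1 by omega, C.zig_two_mul_sub_one hk, Sym2.eq_swap]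
  · rw [edge, show t + 1 = 2 * k - 1 by omega, C.zig_two_mul_sub_one hk, Sym2.eq_swap]
  · rw [edge, zig_zero]

theorem vert_injOn {j : ℕ} (hk : 0 < k) (hj : j ≤ k) :
    Set.InjOn (C.vert j) (Set.Iic (pathLength k m j)) := by
  intro t ht t' ht' h
  simp only [Set.mem_Iic, pathLength] at ht ht'
  unfold vert at h
  split_ifs at h ht ht' <;> first
    | omega
    | exact (C.label_ne_hub _ h).elim
    | exact (C.label_ne_hub _ h.symm).elim
    | (have := C.zig_inj h (by omega) (by omega); omega)
    | (have := C.label_intCast_inj h (by simp only [zigzag_zero]; omega)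
        (by simp only [zigzag_zero]; omega)
       omega)

theorem adj_vert {j t : ℕ} (hk : 0 < k) (hm : m < 2 * k) (hj : j ≤ k)
    (ht : t < pathLength k m j) : G.Adj (C.vert j t) (C.vert j (t + 1)) := by
  rw [← mem_edgeSet, C.edge_name hk ht]
  exact C.edge_mem_edgeSet (valid_name hm hj ht)

end CliqueMinusSpokes

open Classical in
theorem CliqueMinusSpokes.exists_isPathDecomp [Finite V] {G : SimpleGraph V} {hub : V} {k m : ℕ}
    (C : CliqueMinusSpokes G hub k m) (hk : 0 < k) (hm : m < 2 * k)
    (hcard : G.edgeSet.ncard + m ≤ (2 * k + 1).choose 2) :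
    ∃ P : List (Σ u v : V, G.Walk u v), IsPathDecomp G P ∧ P.length = k + 1 ∧
      k - m ≤ P.countP fun p => decide (∃ e, p.2.2.edges.getLast? = some e ∧ hub ∈ e) := by
  obtain ⟨P, hP, hedges⟩ := exists_isPathDecomp_of_seq (k + 1) C.vert (pathLength k m)
    (fun j hj t ht => C.adj_vert hk hm (by omega) ht)
    (fun j hj => C.vert_injOn hk (by omega))
    (fun j hj j' hj' t ht t' ht' h => by
      rw [C.edge_name hk ht, C.edge_name hk ht'] at h
      rw [← owner_name (m := m) (t := t) (by omega : j ≤ k),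
        C.eq_of_edge_eq (valid_name hm (by omega) ht) (valid_name hm (by omega) ht') h,
        owner_name (by omega)])
    (by have := sum_pathLength hk hm; omega)
  refine ⟨P, hP, by simpa using congrArg List.length hedges, ?_⟩
  let endsAtHub (l : List (Sym2 V)) : Bool := decide (∃ e, l.getLast? = some e ∧ hub ∈ e)
  change k - m ≤ P.countP (endsAtHub ∘ fun p => p.2.2.edges)
  rw [← List.countP_map, hedges, List.countP_map]
  refine (List.sub_le_countP_range fun j hmj hjk => ?_).trans
    (List.range_succ (n := k) ▸ List.sublist_append_left _ _).countP_le
  have hlen : pathLength k m j = 2 * k := by rw [pathLength, if_neg (by omega), if_neg (by omega)]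
  refine decide_eq_true ⟨s(C.vert j (2 * k - 1), C.vert j (2 * k - 1 + 1)), ?_, ?_⟩
  · simp only [hlen, List.getLast?_map, List.getLast?_range, if_neg (by omega : 2 * k ≠ 0)]
    rfl
  · rw [show C.vert j (2 * k - 1) = hub by
      rw [vert, if_neg (by omega), if_neg (by omega), if_neg (by omega), if_pos rfl]]
    exact Sym2.mem_mk_left _ _

theorem exists_cliqueMinusSpokes_top_deleteEdges {k : ℕ} (hk : 0 < k)
    {A : Finset (Fin (2 * k + 1))} (hA : Fin.last (2 * k) ∉ A) :
    Nonempty (CliqueMinusSpokes ((⊤ : SimpleGraph (Fin (2 * k + 1))).deleteEdges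
      {e | ∃ u ∈ A, e = s(Fin.last (2 * k), u)}) (Fin.last (2 * k)) k A.card) := by
  have : NeZero (2 * k) := ⟨by omega⟩
  have hA_le : A.card ≤ 2 * k := by simpa using Finset.card_lt_univ_of_notMem hA
  have hcard_mem : Fintype.card {u : {u : Fin (2 * k + 1) // u ≠ Fin.last (2 * k)} // ↑u ∈ A} =
      A.card := by
    rw [← Fintype.card_coe A]
    exact Fintype.card_congr
      { toFun u := ⟨u.1.1, u.2⟩
        invFun a := ⟨⟨a.1, fun h => hA (h ▸ a.2)⟩, a.2⟩ }
  obtain ⟨e, he⟩ := Fintype.exists_equiv_iff_of_card_eq (p := fun i : Fin (2 * k) => ↑i < A.card)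
    (q := fun u : {u : Fin (2 * k + 1) // u ≠ Fin.last (2 * k)} => ↑u ∈ A)
    (by simp [Fintype.card_subtype_compl]) (by rw [Fintype.card_fin_lt_of_le hA_le, hcard_mem])
  let label (x : ZMod (2 * k)) : Fin (2 * k + 1) := e ⟨x.val, ZMod.val_lt x⟩
  have label_injective : Function.Injective label := fun x y h =>
    ZMod.val_injective _ (Fin.mk.inj_iff.1 (e.injective (Subtype.ext h)))
  have label_ne (x) : label x ≠ Fin.last (2 * k) := (e _).2
  refine ⟨label, label_injective, label_ne,
    fun x y hxy => adj_top_deleteEdges_star (label_injective.ne hxy)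
      (fun h => (label_ne x h).elim) (fun h => (label_ne y h).elim),
    fun x hmx hx => adj_top_deleteEdges_star (label_ne x).symm (fun _ h => ?_)
      (fun h => (label_ne x h).elim)⟩
  have := (he _).1 h
  simp only [ZMod.val_cast_of_lt hx] at this
  omega

end Walecki

open Walecki in
theorem gallai_star_removal_odd_k_general (k : ℕ) :
    (∃ P : List (Σ u v : Fin (2 * k + 1), (⊤ : SimpleGraph (Fin (2 * k + 1))).Walk u v),
      IsPathDecomp ⊤ P ∧ P.length = k + 1 ∧
      k ≤ P.countP (fun p => decide (∃ e,
        (p.2.2.edges.head? = some e ∨ p.2.2.edges.getLast? = some e) ∧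
        Fin.last (2 * k) ∈ e))) ∧
    ∀ A : Finset (Fin (2 * k + 1)), Fin.last (2 * k) ∉ A → A.card ≤ 2 * k - 1 →
      ∃ Q : List (Σ x y : Fin (2 * k + 1),
          ((⊤ : SimpleGraph (Fin (2 * k + 1))).deleteEdges
            {e | ∃ u ∈ A, e = s(Fin.last (2 * k), u)}).Walk x y),
        IsPathDecomp ((⊤ : SimpleGraph (Fin (2 * k + 1))).deleteEdges
          {e | ∃ u ∈ A, e = s(Fin.last (2 * k), u)}) Q ∧ Q.length ≤ k + 1 := by
  rcases Nat.eq_zero_or_pos k with rfl | hk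
  · have hempty (G : SimpleGraph (Fin (2 * 0 + 1))) : G.edgeSet = ∅ :=
      edgeSet_eq_empty.2 (by ext a b; simp [Subsingleton.elim (α := Fin 1) a b])
    exact ⟨⟨[⟨0, 0, .nil⟩], ⟨by simp, by simp, by simp [hempty]⟩, rfl, Nat.zero_le _⟩,
      fun A _ _ => ⟨[], ⟨by simp, by simp, by simp [hempty]⟩, Nat.zero_le _⟩⟩
  refine ⟨?_, fun A hA hA_le => ?_⟩
  · obtain ⟨C⟩ := exists_cliqueMinusSpokes_top_deleteEdges hk (Finset.notMem_empty _)
    obtain ⟨P, hP, hlen, hends⟩ := (C.mono (deleteEdges_le _)).exists_isPathDecomp hk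
      (by rw [Finset.card_empty]; omega)
      (by rw [ncard_edgeSet_top, Fintype.card_fin, Finset.card_empty, add_zero])
    rw [Finset.card_empty, Nat.sub_zero] at hends
    refine ⟨P, hP, hlen, hends.trans (List.countP_mono_left fun p _ h => ?_)⟩
    simp only [decide_eq_true_eq] at h ⊢
    obtain ⟨e, he, hv⟩ := h
    exact ⟨e, Or.inr he, hv⟩
  · obtain ⟨C⟩ := exists_cliqueMinusSpokes_top_deleteEdges hk hA
    obtain ⟨Q, hQ, hlen, -⟩ := C.exists_isPathDecomp hk (by omega)
      (by rw [ncard_edgeSet_top_deleteEdges_star hA, Fintype.card_fin])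
    exact ⟨Q, hQ, hlen.le⟩

/-- For odd `k`, `K_{2k+1}` has a path decomposition into `k+1` paths in which
the last vertex meets an end edge of `k` of the paths; consequently any star of
at most `2k-1` edges centered there can be deleted while keeping a path
decomposition into at most `k+1` paths. -/
theorem gallai_star_removal_odd_k (k : ℕ) (hk : Odd k) :
    (∃ P : List (Σ u v : Fin (2 * k + 1), (⊤ : SimpleGraph (Fin (2 * k + 1))).Walk u v),
      IsPathDecomp ⊤ P ∧ P.length = k + 1 ∧
      k ≤ P.countP (fun p => decide (∃ e,
        (p.2.2.edges.head? = some e ∨ p.2.2.edges.getLast? = some e) ∧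
        Fin.last (2 * k) ∈ e))) ∧
    ∀ A : Finset (Fin (2 * k + 1)), Fin.last (2 * k) ∉ A → A.card ≤ 2 * k - 1 →
      ∃ Q : List (Σ x y : Fin (2 * k + 1),
          ((⊤ : SimpleGraph (Fin (2 * k + 1))).deleteEdges
            {e | ∃ u ∈ A, e = s(Fin.last (2 * k), u)}).Walk x y),
        IsPathDecomp ((⊤ : SimpleGraph (Fin (2 * k + 1))).deleteEdges
          {e | ∃ u ∈ A, e = s(Fin.last (2 * k), u)}) Q ∧ Q.length ≤ k + 1 :=
  gallai_star_removal_odd_k_general k
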